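/- Let p, q, r be positive integers and let M_{p,q,r} = ∑_{i=1}^p ∑_{j=1}^q ∑_{k=1}^r e_{i,j} ⊗ e_{j,k} ⊗ e_{k,i} ∈ ℂ^{p×q} ⊗ ℂ^{q×r} ⊗ ℂ^{r×p} be the matrix multiplication tensor. Then this decomposition is a diagonal singular value decomposition: the pqr-tuple of pure tensors (e_{i,j} ⊗ e_{j,k} ⊗ e_{k,i}) is 2-orthogonal, and the singular values of M_{p,q,r} are 1 with multiplicity pqr. -/

import Mathlib

/-! The terms `e_{i,j} ⊗ e_{j,k} ⊗ e_{k,i}` are distinct standard basis vectors, so pairing them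
with a pure unit tensor `u = a ⊗ b ⊗ c` picks out entries of `u`, and `[S]_1` is the supremum of
`∑_{i,j,k} |a_{i,j} b_{j,k} c_{k,i}|`. Cauchy–Schwarz over `(i, j)` and then over `k` bounds this
by `‖a‖ ‖b‖ ‖c‖ = 1`, and `u = e_{1,1} ⊗ e_{1,1} ⊗ e_{1,1}` attains the bound. -/

noncomputable section

open Finset

/-- The third-order tensor space `A ⊗ B ⊗ C` (spaces given by orthonormal bases indexed by
`A`, `B`, `C`), modeled as `EuclideanSpace ℂ (A × B × C)`. -/
abbrev T3 (A B C : Type*) [Fintype A] [Fintype B] [Fintype C] : Type _ :=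
  EuclideanSpace ℂ (A × B × C)

variable {A B C : Type*} [Fintype A] [Fintype B] [Fintype C]

/-- The pure tensor `a ⊗ b ⊗ c`. -/
def pure3 (a : A → ℂ) (b : B → ℂ) (c : C → ℂ) : T3 A B C :=
  WithLp.toLp 2 (fun x : A × B × C => a x.1 * b x.2.1 * c x.2.2)

/-- A pure tensor in `A ⊗ B ⊗ C`. -/
def IsPure3 (T : T3 A B C) : Prop :=
  ∃ (a : A → ℂ) (b : B → ℂ) (c : C → ℂ), ∀ x : A × B × C, T x = a x.1 * b x.2.1 * c x.2.2

/-- Nuclear norm of a tensor. -/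
def nuclearNorm3 (T : T3 A B C) : ℝ :=
  sInf {c : ℝ | ∃ (r : ℕ) (v : Fin r → T3 A B C),
    (∀ i, IsPure3 (v i)) ∧ T = ∑ i, v i ∧ c = ∑ i, ‖v i‖}

/-- `[S]_α`. -/
def bracket3 {κ : Type*} [Fintype κ] (S : κ → T3 A B C) (α : ℝ) : ℝ :=
  sSup {c : ℝ | ∃ u : T3 A B C, IsPure3 u ∧ ‖u‖ = 1 ∧
    c = (∑ i, ‖(inner ℂ (S i) u : ℂ)‖ ^ α) ^ (1 / α)}

/-- The spectral norm `[T]`. -/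
def spectral3 (T : T3 A B C) : ℝ :=
  sSup {c : ℝ | ∃ u : T3 A B C, IsPure3 u ∧ ‖u‖ = 1 ∧ c = ‖(inner ℂ T u : ℂ)‖}

/-- `t`-orthogonality of a tuple of unit tensors. -/
def TOrtho3 {κ : Type*} [Fintype κ] (S : κ → T3 A B C) (t : ℝ) : Prop :=
  (∀ i, ‖S i‖ = 1) ∧ bracket3 S (2 / t) = 1

/-- A diagonal singular value decomposition of `T`: `T = ∑ i, σ i • v i` where all `σ i > 0`
and `(v i)` is a `2`-orthogonal family of pure tensors of unit length.  (The singular values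
of `T` are the `σ i`, with multiplicities.) -/
def IsDSVD3 {κ : Type*} [Fintype κ] (T : T3 A B C) (σ : κ → ℝ) (v : κ → T3 A B C) : Prop :=
  (∀ i, 0 < σ i) ∧ (∀ i, IsPure3 (v i)) ∧ TOrtho3 v 2 ∧ T = ∑ i, (σ i : ℂ) • v i

/-- The standard basis vector `e_a`. -/
def std {A : Type*} [DecidableEq A] (a : A) : A → ℂ := fun x => if x = a then 1 else 0

/-- The matrix multiplication tensor
`M_{p,q,r} = ∑_{i,j,k} e_{i,j} ⊗ e_{j,k} ⊗ e_{k,i} ∈ ℂ^{p×q} ⊗ ℂ^{q×r} ⊗ ℂ^{r×p}`. -/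
def matMulTensor (p q r : ℕ) : T3 (Fin p × Fin q) (Fin q × Fin r) (Fin r × Fin p) :=
  ∑ i : Fin p, ∑ j : Fin q, ∑ k : Fin r,
    pure3 (std (i, j)) (std (j, k)) (std (k, i))

def cycleIndex (w : A × B × C) : (A × B) × (B × C) × (C × A) :=
  ((w.1, w.2.1), (w.2.1, w.2.2), (w.2.2, w.1))

omit [Fintype A] [Fintype B] [Fintype C] in
lemma cycleIndex_injective : Function.Injective (cycleIndex : A × B × C → _) := by
  rintro ⟨i, j, k⟩ ⟨i', j', k'⟩ h
  simp only [cycleIndex, Prod.mk.injEq] at h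
  obtain ⟨⟨rfl, rfl⟩, ⟨-, rfl⟩, -⟩ := h
  rfl

lemma sum_cyclic_mul_le_sqrt_sum_sq (F : A × B → ℝ) (G : B × C → ℝ) (H : C × A → ℝ) :
    ∑ w : A × B × C, F (w.1, w.2.1) * G (w.2.1, w.2.2) * H (w.2.2, w.1)
      ≤ √(∑ x, F x ^ 2) * (√(∑ y, G y ^ 2) * √(∑ z, H z ^ 2)) := by
  set GH : A × B → ℝ := fun x => ∑ k, G (x.2, k) * H (k, x.1)
  have hGH : ∑ x, GH x ^ 2 ≤ (∑ y, G y ^ 2) * ∑ z, H z ^ 2 :=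
    calc ∑ x, GH x ^ 2
        ≤ ∑ x : A × B, (∑ k, G (x.2, k) ^ 2) * ∑ k, H (k, x.1) ^ 2 :=
          sum_le_sum fun x _ => sum_mul_sq_le_sq_mul_sq _ _ _
      _ = (∑ y, G y ^ 2) * ∑ z, H z ^ 2 := by
          simp_rw [Fintype.sum_prod_type, ← sum_mul, ← mul_sum]
          congr 1
          exact sum_comm
  calc ∑ w : A × B × C, F (w.1, w.2.1) * G (w.2.1, w.2.2) * H (w.2.2, w.1)
      = ∑ x, F x * GH x := by
        simp [GH, Fintype.sum_prod_type, mul_sum, mul_assoc]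
    _ ≤ √(∑ x, F x ^ 2) * √(∑ x, GH x ^ 2) := Real.sum_mul_le_sqrt_mul_sqrt _ _ _
    _ ≤ √(∑ x, F x ^ 2) * (√(∑ y, G y ^ 2) * √(∑ z, H z ^ 2)) := by
        gcongr
        rw [← Real.sqrt_mul (by positivity)]
        exact Real.sqrt_le_sqrt hGH

lemma norm_pure3 (a : A → ℂ) (b : B → ℂ) (c : C → ℂ) :
    ‖pure3 a b c‖ = √(∑ x, ‖a x‖ ^ 2) * (√(∑ y, ‖b y‖ ^ 2) * √(∑ z, ‖c z‖ ^ 2)) := by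
  rw [EuclideanSpace.norm_eq, ← Real.sqrt_mul (by positivity), ← Real.sqrt_mul (by positivity)]
  congr 1
  simp only [pure3, PiLp.toLp_apply, norm_mul, mul_pow, Fintype.sum_prod_type, mul_assoc,
    ← mul_sum, ← sum_mul]

lemma sum_norm_cyclic_le_norm {u : T3 (A × B) (B × C) (C × A)} (hu : IsPure3 u) :
    ∑ w : A × B × C, ‖u (cycleIndex w)‖ ≤ ‖u‖ := by
  obtain ⟨a, b, c, hu⟩ := hu
  have hu' : u = pure3 a b c := by ext x; exact hu x
  calc ∑ w : A × B × C, ‖u (cycleIndex w)‖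
      = ∑ w : A × B × C, ‖a (w.1, w.2.1)‖ * ‖b (w.2.1, w.2.2)‖ * ‖c (w.2.2, w.1)‖ := by
        simp_rw [cycleIndex, hu, norm_mul]
    _ ≤ ‖u‖ := by
        rw [hu', norm_pure3]
        exact sum_cyclic_mul_le_sqrt_sum_sq (‖a ·‖) (‖b ·‖) (‖c ·‖)

lemma bracket3_eq_one {κ : Type*} [Fintype κ] {S : κ → T3 A B C} {α : ℝ}
    (hle : ∀ u, IsPure3 u → ‖u‖ = 1 → (∑ i, ‖(inner ℂ (S i) u : ℂ)‖ ^ α) ^ (1 / α) ≤ 1)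
    (hex : ∃ u, IsPure3 u ∧ ‖u‖ = 1 ∧ (∑ i, ‖(inner ℂ (S i) u : ℂ)‖ ^ α) ^ (1 / α) = 1) :
    bracket3 S α = 1 := by
  refine IsGreatest.csSup_eq ⟨?_, ?_⟩
  · obtain ⟨u, hpure, hnorm, hval⟩ := hex
    exact ⟨u, hpure, hnorm, hval.symm⟩
  · rintro _ ⟨u, hpure, hnorm, rfl⟩
    exact hle u hpure hnorm

lemma pure3_std_eq_single [DecidableEq A] [DecidableEq B] [DecidableEq C] (a : A) (b : B) (c : C) :
    pure3 (std a) (std b) (std c) = EuclideanSpace.single (a, b, c) (1 : ℂ) := by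
  ext ⟨x, y, z⟩
  simp only [pure3, std, PiLp.toLp_apply, PiLp.single_apply, Prod.mk.injEq]
  by_cases hx : x = a <;> by_cases hy : y = b <;> by_cases hz : z = c <;> simp [hx, hy, hz]

section MatMulTerm

variable {α β γ : Type*} [Fintype α] [Fintype β] [Fintype γ]
  [DecidableEq α] [DecidableEq β] [DecidableEq γ]

def matMulTerm (w : α × β × γ) : T3 (α × β) (β × γ) (γ × α) :=
  pure3 (std (w.1, w.2.1)) (std (w.2.1, w.2.2)) (std (w.2.2, w.1))

lemma matMulTerm_eq_single (w : α × β × γ) :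
    matMulTerm w = EuclideanSpace.single (cycleIndex w) 1 :=
  pure3_std_eq_single _ _ _

lemma isPure3_matMulTerm (w : α × β × γ) : IsPure3 (matMulTerm w) :=
  ⟨_, _, _, fun _ => rfl⟩

lemma norm_matMulTerm (w : α × β × γ) : ‖matMulTerm w‖ = 1 := by
  simp [matMulTerm_eq_single]

lemma inner_matMulTerm (w : α × β × γ) (u : T3 (α × β) (β × γ) (γ × α)) :
    inner ℂ (matMulTerm w) u = u (cycleIndex w) := by
  simp [matMulTerm_eq_single, EuclideanSpace.inner_single_left]

lemma bracket3_matMulTerm_one [Nonempty α] [Nonempty β] [Nonempty γ] :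
    bracket3 (matMulTerm : α × β × γ → _) 1 = 1 := by
  refine bracket3_eq_one (fun u hu hnorm => ?_) ?_
  · simpa [inner_matMulTerm, hnorm] using sum_norm_cyclic_le_norm hu
  · obtain ⟨w₀⟩ : Nonempty (α × β × γ) := inferInstance
    refine ⟨matMulTerm w₀, isPure3_matMulTerm w₀, norm_matMulTerm w₀, ?_⟩
    simp only [inner_matMulTerm]
    simp [matMulTerm_eq_single, PiLp.single_apply, cycleIndex_injective.eq_iff, apply_ite]

end MatMulTerm

lemma matMulTensor_eq_sum_matMulTerm (p q r : ℕ) :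
    matMulTensor p q r = ∑ w, matMulTerm w := by
  simp only [matMulTensor, matMulTerm, Fintype.sum_prod_type]

/-- **Theorem 1.8.** The decomposition `M_{p,q,r} = ∑_{i,j,k} e_{i,j} ⊗ e_{j,k} ⊗ e_{k,i}`
is a diagonal singular value decomposition: the `pqr`-tuple of pure tensors
`(e_{i,j} ⊗ e_{j,k} ⊗ e_{k,i})` is `2`-orthogonal, and the singular values of `M_{p,q,r}`
are `1` with multiplicity `pqr`. -/
theorem matMulTensor_isDSVD (p q r : ℕ) (hp : 0 < p) (hq : 0 < q) (hr : 0 < r) :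
    IsDSVD3 (matMulTensor p q r)
      (fun _ : Fin p × Fin q × Fin r => (1 : ℝ))
      (fun w => pure3 (std (w.1, w.2.1)) (std (w.2.1, w.2.2)) (std (w.2.2, w.1))) := by
  have : Nonempty (Fin p) := Fin.pos_iff_nonempty.mp hp
  have : Nonempty (Fin q) := Fin.pos_iff_nonempty.mp hq
  have : Nonempty (Fin r) := Fin.pos_iff_nonempty.mp hr
  refine ⟨fun _ => one_pos, isPure3_matMulTerm, ⟨norm_matMulTerm, ?_⟩, ?_⟩
  · rw [div_self two_ne_zero]
    exact bracket3_matMulTerm_one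
  · simp only [Complex.ofReal_one, one_smul]
    exact matMulTensor_eq_sum_matMulTerm p q r
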